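/- arXiv:0910.0218 — 2 statements merged into one kernel-verified Lean document; each statement's English description precedes it below -/
import Mathlib

section
/- Let G ≤ Homeo₊(S^1) contain no non-abelian free subgroup. Then G₀ = {g ∈ G : Fix(g) ≠ ∅} is a normal subgroup of G. -/
open Function Set

notation "S¹" => AddCircle (1:ℝ)

/-- The group structure on self-homeomorphisms, with `(f * g) x = f (g x)`. -/
instance homeoGroup (X : Type*) [TopologicalSpace X] : Group (X ≃ₜ X) where
  mul f g := g.trans f
  one := Homeomorph.refl X
  inv := Homeomorph.symm
  mul_assoc a b c := Homeomorph.ext fun _ => rfl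
  one_mul a := Homeomorph.ext fun _ => rfl
  mul_one a := Homeomorph.ext fun _ => rfl
  inv_mul_cancel a := Homeomorph.ext fun x => a.symm_apply_apply x

/-- `F` is a lift of the circle homeomorphism `f` through the projection `ℝ → ℝ/ℤ`. -/
def IsLift (f : S¹ ≃ₜ S¹) (F : CircleDeg1Lift) : Prop :=
  ∀ x : ℝ, f (x : S¹) = ((F x : ℝ) : S¹)

/-- A circle homeomorphism is orientation-preserving iff it admits a monotone degree-one
lift to the real line. -/
def OrientationPreserving (f : S¹ ≃ₜ S¹) : Prop := ∃ F : CircleDeg1Lift, IsLift f F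

open Classical in
/-- Poincaré's rotation number of a circle homeomorphism, as an element of `ℝ/ℤ`;
the translation number of any lift, reduced mod 1. -/
noncomputable def rot (f : S¹ ≃ₜ S¹) : S¹ :=
  if h : OrientationPreserving f then ((h.choose.translationNumber : ℝ) : S¹) else 0

/-- The fixed-point set of a circle homeomorphism. -/
def FixSet (f : S¹ ≃ₜ S¹) : Set S¹ := {s | f s = s}

/-- A subgroup has a non-abelian free subgroup iff the free group of rank 2 embeds into it. -/
def HasFreeSubgroup {Γ : Type*} [Group Γ] (G : Subgroup Γ) : Prop :=
  ∃ φ : FreeGroup (Fin 2) →* Γ, Function.Injective φ ∧ ∀ w, φ w ∈ G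

open Filter Topology Pointwise

/-!
Two elements `f, g ∈ G` with fixed points but no common fixed point would generate a free
group, by ping-pong. Lifting `f` to an order isomorphism of `ℝ` with fixed points, every orbit is
monotone and converges to a fixed point; monotonicity makes the convergence locally uniform, so
by compactness high powers of `f`, positive or negative, push the complement of any neighbourhood
of `Fix f` into that neighbourhood. Powers `f ^ N`, `g ^ M` then play ping-pong on disjoint
neighbourhoods of `Fix f` and `Fix g`. Hence `G₀` is closed under products; closure under
inverses and conjugation by `G` is clear.
-/

instance Homeomorph.applyMulAction (X : Type*) [TopologicalSpace X] : MulAction (X ≃ₜ X) X where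
  smul f x := f x
  one_smul _ := rfl
  mul_smul _ _ _ := rfl

theorem FreeGroup.injective_lift_of_zpow_ping_pong {ι G α : Type*} [Nontrivial ι] [Group G]
    [MulAction G α] (a : ι → G) (X : ι → Set α) (hX : ∀ i, (X i).Nonempty)
    (hXdisj : Pairwise (Disjoint on X)) (hpp : ∀ i, ∀ k : ℤ, k ≠ 0 → a i ^ k • (X i)ᶜ ⊆ X i) :
    Injective (FreeGroup.lift a) := by
  have hlift : FreeGroup.lift a = (Monoid.CoprodI.lift fun i => FreeGroup.lift fun _ => a i).comp
      (freeGroupEquivCoprodI (ι := ι)).toMonoidHom := by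
    ext i
    simp
  rw [hlift, MonoidHom.coe_comp]
  refine Injective.comp ?_ (MulEquiv.injective _)
  refine Monoid.CoprodI.lift_injective_of_ping_pong _
    (Or.inr ⟨Classical.arbitrary ι, Cardinal.natCast_lt_aleph0.le.trans (Cardinal.aleph0_le_mk _)⟩)
    X hX hXdisj fun i j hij h hne => ?_
  obtain ⟨k, rfl⟩ : ∃ k : ℤ, FreeGroup.of () ^ k = h :=
    ⟨_, FreeGroup.freeGroupUnitEquivInt.symm_apply_apply h⟩
  have hk : k ≠ 0 := by rintro rfl; exact hne (zpow_zero _)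
  rw [map_zpow, FreeGroup.lift_apply_of]
  exact (Set.smul_set_mono (hXdisj hij.symm).subset_compl_right).trans (hpp i k hk)

theorem exists_zpow_smul_subset_of_eventually {G α : Type*} [Group G] [MulAction G α] {a : G}
    {s t : Set α} (h : ∀ᶠ n in atTop, a ^ n • s ⊆ t ∧ a⁻¹ ^ n • s ⊆ t) :
    ∃ N : ℕ, ∀ k : ℤ, k ≠ 0 → (a ^ N) ^ k • s ⊆ t := by
  obtain ⟨N, hN⟩ := h.exists_forall_of_atTop
  refine ⟨N, fun k hk => ?_⟩
  obtain ⟨n, rfl | rfl⟩ := Int.eq_nat_or_neg k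
  all_goals have hn : N ≤ N * n := Nat.le_mul_of_pos_right N (by omega)
  · rw [zpow_natCast, ← pow_mul]
    exact (hN _ hn).1
  · rw [zpow_neg, zpow_natCast, ← pow_mul, ← inv_pow]
    exact (hN _ hn).2

section OrderIso

variable {α : Type*} [ConditionallyCompleteLinearOrder α] [TopologicalSpace α] [OrderTopology α]

theorem OrderIso.exists_nhds_eventually_mapsTo_iterate_of_lt_apply (E : α ≃o α) {z c : α}
    (hz : z < E z) (hzc : z ≤ c) (hc : IsFixedPt E c) :
    ∃ p, IsFixedPt E p ∧ ∃ I ∈ 𝓝 (E z), ∀ W ∈ 𝓝 p, ∀ᶠ n in atTop, MapsTo E^[n] I W := by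
  have hmono : Monotone fun n => E^[n] z := E.monotone.monotone_iterate_of_le_map hz.le
  have hbdd : BddAbove (range fun n => E^[n] z) := ⟨c, by
    rintro _ ⟨n, rfl⟩
    exact (E.monotone.iterate n hzc).trans_eq (hc.iterate n)⟩
  obtain ⟨p, hlim⟩ : ∃ p, Tendsto (fun n => E^[n] z) atTop (𝓝 p) :=
    ⟨_, tendsto_atTop_ciSup hmono hbdd⟩
  have hp : IsFixedPt E p := isFixedPt_of_tendsto_iterate hlim E.continuous.continuousAt
  have hzp : E z < p := (hmono.ge_of_tendsto hlim 1).lt_of_ne fun h =>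
    hz.ne' (E.injective (by rw [← h] at hp; exact hp))
  refine ⟨p, hp, Ioo z p, Ioo_mem_nhds hz hzp, fun W hW => ?_⟩
  obtain ⟨u, hup, huW⟩ := exists_Ioc_subset_of_mem_nhds hW ⟨z, hz.trans hzp⟩
  -- every `y ∈ Ioo z p` is squeezed: `E^[n] z ≤ E^[n] y ≤ E^[n] p = p`
  filter_upwards [hlim.eventually (lt_mem_nhds hup)] with n hn y hy
  exact huW ⟨hn.trans_le (E.monotone.iterate n hy.1.le),
    (E.monotone.iterate n hy.2.le).trans_eq (hp.iterate n)⟩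

theorem OrderIso.exists_nhds_eventually_mapsTo_iterate (E : α ≃o α) {x c₁ c₂ : α}
    (hx : ¬IsFixedPt E x) (hc₁ : c₁ ≤ x) (hc₂ : x ≤ c₂) (hE₁ : IsFixedPt E c₁)
    (hE₂ : IsFixedPt E c₂) :
    ∃ p, IsFixedPt E p ∧ ∃ I ∈ 𝓝 x, ∀ W ∈ 𝓝 p, ∀ᶠ n in atTop, MapsTo E^[n] I W := by
  rcases lt_or_gt_of_ne hx with h | h
  -- in `αᵒᵈ`, the case `E x < x` becomes the case `x < E x`
  · have hx' : x < E.symm x := by simpa using E.symm.strictMono h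
    have := E.dual.exists_nhds_eventually_mapsTo_iterate_of_lt_apply
      (z := OrderDual.toDual (E.symm x)) (c := OrderDual.toDual c₁)
      (show E (E.symm x) < E.symm x by rwa [E.apply_symm_apply]) (hc₁.trans hx'.le) hE₁
    obtain ⟨p, hp, I, hI, hW⟩ := this
    rw [show E.dual (OrderDual.toDual (E.symm x)) = OrderDual.toDual x from
      congrArg OrderDual.toDual (E.apply_symm_apply x)] at hI
    exact ⟨OrderDual.ofDual p, hp, I, hI, hW⟩
  · have hx' : E.symm x < x := by simpa using E.symm.strictMono h
    have := E.exists_nhds_eventually_mapsTo_iterate_of_lt_apply (z := E.symm x) (c := c₂)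
      (by rwa [E.apply_symm_apply]) (hx'.le.trans hc₂) hE₂
    rwa [E.apply_symm_apply] at this

end OrderIso

theorem unitAddCircle_coe_eq_coe_iff {x y : ℝ} : (x : S¹) = y ↔ ∃ m : ℤ, y = x + m := by
  rw [eq_comm, ← sub_eq_zero, ← AddCircle.coe_sub, AddCircle.coe_eq_zero_iff]
  simp only [zsmul_eq_mul, mul_one]
  exact exists_congr fun m => ⟨fun h => by linarith, fun h => by linarith⟩

theorem isClosed_fixSet (f : S¹ ≃ₜ S¹) : IsClosed (FixSet f) :=
  isClosed_eq f.continuous continuous_id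

theorem fixSet_inv (f : S¹ ≃ₜ S¹) : FixSet f⁻¹ = FixSet f :=
  Set.ext fun _ => f.symm_apply_eq.trans eq_comm

namespace IsLift

variable {f g : S¹ ≃ₜ S¹} {F G : CircleDeg1Lift}

theorem mul (hf : IsLift f F) (hg : IsLift g G) : IsLift (f * g) (F * G) := fun x => by
  show f (g x) = _
  rw [hg, hf, CircleDeg1Lift.mul_apply]

theorem pow (hf : IsLift f F) (n : ℕ) : IsLift (f ^ n) (F ^ n) := by
  induction n with
  | zero => exact fun _ => rfl
  | succ n ih => rw [pow_succ, pow_succ]; exact ih.mul hf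

theorem inv_units {u : CircleDeg1Liftˣ} (hu : IsLift f u) : IsLift f⁻¹ ↑u⁻¹ := fun x =>
  f.symm_apply_eq.mpr (by rw [hu, CircleDeg1Lift.units_apply_inv_apply])

theorem strictMono (hf : IsLift f F) : StrictMono F := by
  intro x y hxy
  refine (F.mono hxy.le).lt_of_ne fun hFxy => hxy.ne ?_
  have hy : y < x + 1 := by
    by_contra! hy
    have := F.mono hy
    rw [F.map_add_one] at this
    linarith
  have hxy' : (x : S¹) = y := f.injective (by rw [hf, hf, hFxy])
  exact (AddCircle.coe_eq_coe_iff_of_mem_Ico (a := x) ⟨le_rfl, by linarith⟩ ⟨hxy.le, hy⟩).mp hxy'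

theorem surjective (hf : IsLift f F) : Surjective F := by
  intro z
  obtain ⟨w, hw⟩ := QuotientAddGroup.mk_surjective (f.symm z)
  obtain ⟨m, hm⟩ := unitAddCircle_coe_eq_coe_iff.mp
    (show ((F w : ℝ) : S¹) = z by rw [← hf, hw, Homeomorph.apply_symm_apply])
  exact ⟨w + m, by rw [F.map_add_int, hm]⟩

theorem eventually_mapsTo_compl {u : CircleDeg1Liftˣ} (hu : IsLift f u)
    {c : ℝ} (hc : IsFixedPt u c) {U : Set S¹} (hU : IsOpen U) (hfU : FixSet f ⊆ U) :
    ∀ᶠ n : ℕ in atTop, MapsTo (f ^ n) Uᶜ U := by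
  set E := CircleDeg1Lift.toOrderIso u
  have hfE : ∀ n (x : ℝ), (f ^ n) x = ((E^[n] x : ℝ) : S¹) := fun n x => by
    rw [hu.pow n x, CircleDeg1Lift.coe_pow, CircleDeg1Lift.coe_toOrderIso]
  have hE : ∀ m : ℤ, IsFixedPt E (c + m) := fun m => by
    rw [IsFixedPt, CircleDeg1Lift.coe_toOrderIso, CircleDeg1Lift.map_add_int, hc]
  have hfix : ∀ y, IsFixedPt E y → ((y : ℝ) : S¹) ∈ FixSet f := fun y hy =>
    (hu y).trans (congrArg _ hy)
  refine hU.isClosed_compl.isCompact.induction_on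
    (p := fun V => ∀ᶠ n : ℕ in atTop, MapsTo (f ^ n) V U)
    (Eventually.of_forall fun _ => mapsTo_empty _ _)
    (fun V W hVW hW => hW.mono fun _ hn => hn.mono_left hVW)
    (fun V W hV hW => (hV.and hW).mono fun _ hn => hn.1.union hn.2) fun s hs => ?_
  obtain ⟨x, rfl⟩ := QuotientAddGroup.mk_surjective s
  have hx : ¬IsFixedPt E x := fun hx => hs (hfU (hfix x hx))
  obtain ⟨p, hp, I, hI, hIp⟩ := E.exists_nhds_eventually_mapsTo_iterate hx
    (by have := Int.floor_le (x - c); linarith : c + ⌊x - c⌋ ≤ x)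
    (by have := Int.le_ceil (x - c); linarith : x ≤ c + ⌈x - c⌉) (hE _) (hE _)
  refine ⟨_, mem_nhdsWithin_of_mem_nhds (QuotientAddGroup.isOpenMap_coe.image_mem_nhds hI), ?_⟩
  have hpU : ((p : ℝ) : S¹) ∈ U := hfU (hfix p hp)
  filter_upwards [hIp _ ((hU.preimage continuous_quotient_mk').mem_nhds hpU)] with n hn
  rintro _ ⟨y, hy, rfl⟩
  rw [hfE]
  exact hn hy

end IsLift

theorem OrientationPreserving.exists_units_isLift {f : S¹ ≃ₜ S¹} (hf : OrientationPreserving f)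
    (hfix : (FixSet f).Nonempty) : ∃ u : CircleDeg1Liftˣ, IsLift f u ∧ ∃ c, IsFixedPt u c := by
  obtain ⟨F, hF⟩ := hf
  obtain ⟨v, rfl⟩ :=
    CircleDeg1Lift.isUnit_iff_bijective.mpr ⟨hF.strictMono.injective, hF.surjective⟩
  obtain ⟨s, hs⟩ := hfix
  obtain ⟨c, rfl⟩ := QuotientAddGroup.mk_surjective s
  obtain ⟨m, hm⟩ := unitAddCircle_coe_eq_coe_iff.mp ((hF c).symm.trans hs)
  refine ⟨CircleDeg1Lift.translate (Multiplicative.ofAdd (m : ℝ)) * v, fun x => ?_, c, ?_⟩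
  · rw [hF, Units.val_mul, CircleDeg1Lift.mul_apply, CircleDeg1Lift.translate_apply]
    exact unitAddCircle_coe_eq_coe_iff.mpr ⟨m, add_comm _ _⟩
  · rw [IsFixedPt, Units.val_mul, CircleDeg1Lift.mul_apply, CircleDeg1Lift.translate_apply]
    linarith

theorem OrientationPreserving.exists_zpow_smul_compl_subset {f : S¹ ≃ₜ S¹}
    (hf : OrientationPreserving f) (hfix : (FixSet f).Nonempty) {U : Set S¹} (hU : IsOpen U)
    (hfU : FixSet f ⊆ U) : ∃ N : ℕ, ∀ k : ℤ, k ≠ 0 → (f ^ N) ^ k • Uᶜ ⊆ U := by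
  obtain ⟨u, hu, c, hc⟩ := hf.exists_units_isLift hfix
  have hc' : IsFixedPt ↑u⁻¹ c := by
    have := CircleDeg1Lift.units_inv_apply_apply u c
    rwa [hc.eq] at this
  apply exists_zpow_smul_subset_of_eventually
  filter_upwards [hu.eventually_mapsTo_compl hc hU hfU,
    hu.inv_units.eventually_mapsTo_compl hc' hU (fixSet_inv f ▸ hfU)] with n h₁ h₂
  exact ⟨smul_set_subset_iff.mpr h₁, smul_set_subset_iff.mpr h₂⟩

theorem hasFreeSubgroup_of_disjoint_fixSet {G : Subgroup (S¹ ≃ₜ S¹)} {f g : S¹ ≃ₜ S¹}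
    (hfG : f ∈ G) (hgG : g ∈ G) (hf : OrientationPreserving f) (hg : OrientationPreserving g)
    (hffix : (FixSet f).Nonempty) (hgfix : (FixSet g).Nonempty)
    (hfg : Disjoint (FixSet f) (FixSet g)) : HasFreeSubgroup G := by
  obtain ⟨δ, hδ, hdisj⟩ := hfg.exists_thickenings (isClosed_fixSet f).isCompact (isClosed_fixSet g)
  obtain ⟨N, hN⟩ := hf.exists_zpow_smul_compl_subset hffix Metric.isOpen_thickening
    (Metric.self_subset_thickening hδ _)
  obtain ⟨M, hM⟩ := hg.exists_zpow_smul_compl_subset hgfix Metric.isOpen_thickening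
    (Metric.self_subset_thickening hδ _)
  refine ⟨FreeGroup.lift ![f ^ N, g ^ M], FreeGroup.injective_lift_of_zpow_ping_pong _
    ![Metric.thickening δ (FixSet f), Metric.thickening δ (FixSet g)] ?_ ?_ ?_,
    fun w => FreeGroup.range_lift_le ?_ ⟨w, rfl⟩⟩
  · exact Fin.forall_fin_two.mpr ⟨hffix.mono (Metric.self_subset_thickening hδ _),
      hgfix.mono (Metric.self_subset_thickening hδ _)⟩
  · intro i j hij
    fin_cases i <;> fin_cases j
    exacts [absurd rfl hij, hdisj, hdisj.symm, absurd rfl hij]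
  · exact Fin.forall_fin_two.mpr ⟨hN, hM⟩
  · exact range_subset_iff.mpr (Fin.forall_fin_two.mpr ⟨pow_mem hfG N, pow_mem hgG M⟩)

/-- If `G ≤ Homeo₊(S¹)` has no non-abelian free subgroup, then
`G₀ = {g ∈ G | Fix g ≠ ∅}` is a subgroup, normal in `G`. -/
theorem stmt4 (G : Subgroup (S¹ ≃ₜ S¹)) (hG : ∀ g ∈ G, OrientationPreserving g)
    (hfree : ¬ HasFreeSubgroup G) :
    ∃ N : Subgroup (S¹ ≃ₜ S¹),
      (N : Set (S¹ ≃ₜ S¹)) = {g | g ∈ G ∧ (FixSet g).Nonempty} ∧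
      ∀ g ∈ G, ∀ h ∈ N, g * h * g⁻¹ ∈ N := by
  refine ⟨{ carrier := {g | g ∈ G ∧ (FixSet g).Nonempty}
            mul_mem' := ?_
            one_mem' := ⟨G.one_mem, 0, rfl⟩
            inv_mem' := ?_ }, rfl, ?_⟩
  · rintro a b ⟨haG, ha⟩ ⟨hbG, hb⟩
    obtain ⟨s, hsa, hsb⟩ := not_disjoint_iff.mp fun hab =>
      hfree (hasFreeSubgroup_of_disjoint_fixSet haG hbG (hG a haG) (hG b hbG) ha hb hab)
    exact ⟨G.mul_mem haG hbG, s, show a (b s) = s by rw [hsb, hsa]⟩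
  · rintro a ⟨haG, ha⟩
    exact ⟨G.inv_mem haG, fixSet_inv a ▸ ha⟩
  · rintro g hg h ⟨hhG, s, hs⟩
    refine ⟨G.mul_mem (G.mul_mem hg hhG) (G.inv_mem hg), g s, ?_⟩
    show g (h (g.symm (g s))) = g s
    rw [g.symm_apply_apply, hs]
end

section
/- Let f, g ∈ Homeo₊(S^1) with equal irrational rotation numbers rot(f) = rot(g) ∉ ℚ/ℤ. Then f g⁻¹ has a fixed point in S^1. -/
open Function Set

/-!
Let `F`, `G` be lifts of `f`, `g`. If `f` and `g` never agreed, the continuous `1`-periodic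
function `F - G` would avoid `ℤ`, so by compactness `m + s ≤ F - G ≤ m + 1 - s` for some integer
`m` and some `s > 0`. At an irrational translation number a uniform gap between lifts forces a
strict inequality of translation numbers: iterating, `Gⁿ + s ≤ Fⁿ`, and choosing `n` with
`n τ(F)` just below an integer `j` (irrational rotations are dense) gives
`τ(Gⁿ) ≤ j - s < n τ(F)`. Hence `m < τ(F) - τ(G) < m + 1`, contradicting `rot f = rot g`.
-/

open CircleDeg1Lift Filter

local notation "τ" => CircleDeg1Lift.translationNumber

lemma AddCircle.coe_eq_coe_iff_exists_int {a b : ℝ} :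
    (a : S¹) = b ↔ ∃ k : ℤ, a - b = k := by
  rw [← sub_eq_zero, ← AddCircle.coe_sub, AddCircle.coe_eq_zero_iff]
  simp only [zsmul_eq_mul, mul_one, eq_comm]

lemma IsLift.continuous {f : S¹ ≃ₜ S¹} {F : CircleDeg1Lift} (hF : IsLift f F) :
    Continuous F := by
  refine F.continuous_iff_surjective.2 fun y ↦ ?_
  obtain ⟨x, hx⟩ := QuotientAddGroup.mk_surjective (f.symm y)
  have : ((F x : ℝ) : S¹) = y := by rw [← hF, hx, Homeomorph.apply_symm_apply]
  obtain ⟨k, hk⟩ := AddCircle.coe_eq_coe_iff_exists_int.1 this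
  exact ⟨x - k, by rw [F.map_sub_int]; linarith⟩

lemma Irrational.exists_pos_nat_mul_mem_Ioo {α : ℝ} (hα : Irrational α) {ε : ℝ} (hε : 0 < ε) :
    ∃ n : ℕ, 0 < n ∧ ∃ j : ℤ, (n : ℝ) * α ∈ Ioo ((j : ℝ) - ε) j := by
  have hdense : DenseRange (fun n : ℤ ↦ n • (α : S¹)) :=
    AddCircle.denseRange_zsmul_coe_iff.2 (by simpa using hα)
  have hU : IsOpen (((↑) : ℝ → S¹) '' Ioo (-ε) 0) := QuotientAddGroup.isOpenMap_coe _ isOpen_Ioo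
  have hx : ((-ε / 2 : ℝ) : S¹) ∈ ((↑) : ℝ → S¹) '' Ioo (-ε) 0 :=
    ⟨_, ⟨by linarith, by linarith⟩, rfl⟩
  have hcl : MapClusterPt ((-ε / 2 : ℝ) : S¹) atTop (fun n : ℕ ↦ n • (α : S¹)) :=
    ((mapClusterPt_atTop_nsmul_tfae _ _).out 0 3).2 (hdense _)
  -- in a compact group, the `ℕ`-multiples accumulate wherever the `ℤ`-multiples do
  obtain ⟨n, ⟨y, hy, hyn⟩, hn⟩ :=
    ((hcl.frequently (hU.mem_nhds hx)).and_eventually (eventually_gt_atTop 0)).exists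
  rw [← AddCircle.coe_nsmul, nsmul_eq_mul, AddCircle.coe_eq_coe_iff_exists_int] at hyn
  obtain ⟨k, hk⟩ := hyn
  exact ⟨n, hn, -k, by push_cast; constructor <;> linarith [hy.1, hy.2]⟩

lemma Function.Periodic.exists_forall_mem_Icc_of_ne_intCast {d : ℝ → ℝ} (hper : Periodic d 1)
    (hd : Continuous d) (hne : ∀ x (j : ℤ), d x ≠ j) :
    ∃ m : ℤ, ∃ s : ℝ, 0 < s ∧ ∀ x, d x ∈ Icc (m + s) (m + 1 - s) := by
  have hcpt := hper.compact_of_continuous one_ne_zero hd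
  obtain ⟨_, ⟨x₀, rfl⟩, hmin⟩ := hcpt.exists_isLeast (range_nonempty d)
  obtain ⟨_, ⟨x₁, rfl⟩, hmax⟩ := hcpt.exists_isGreatest (range_nonempty d)
  set m := ⌊d x₀⌋
  have hm : (m : ℝ) < d x₀ := (Int.floor_le _).lt_of_ne fun h ↦ hne x₀ m h.symm
  have hm₁ : d x₁ < m + 1 := by
    by_contra! h
    obtain ⟨x, hx⟩ := (isPreconnected_range hd).Icc_subset ⟨x₀, rfl⟩ ⟨x₁, rfl⟩
      ⟨(Int.lt_floor_add_one _).le, h⟩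
    exact hne x (m + 1) (by push_cast; exact hx)
  refine ⟨m, min (d x₀ - m) (m + 1 - d x₁), lt_min (by linarith) (by linarith), fun x ↦
    ⟨?_, ?_⟩⟩
  · linarith [min_le_left (d x₀ - m) (m + 1 - d x₁), hmin ⟨x, rfl⟩]
  · linarith [min_le_right (d x₀ - m) (m + 1 - d x₁), hmax ⟨x, rfl⟩]

namespace CircleDeg1Lift

lemma pow_apply_add_le {f g : CircleDeg1Lift} {s : ℝ} (hs : 0 ≤ s) (h : ∀ x, g x + s ≤ f x)
    {n : ℕ} (hn : n ≠ 0) (x : ℝ) : (g ^ n) x + s ≤ (f ^ n) x := by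
  induction n with
  | zero => exact absurd rfl hn
  | succ n ih =>
    rcases eq_or_ne n 0 with rfl | hn₀
    · simpa using h x
    rw [pow_succ', pow_succ', mul_apply, mul_apply]
    linarith [h ((g ^ n) x), f.mono (show (g ^ n) x ≤ (f ^ n) x by linarith [ih hn₀])]

lemma translationNumber_lt_of_forall_add_le {f g : CircleDeg1Lift} (hf : Irrational (τ f))
    {s : ℝ} (hs : 0 < s) (h : ∀ x, g x + s ≤ f x) : τ g < τ f := by
  refine (translationNumber_mono fun x ↦ by linarith [h x]).lt_of_ne fun hgf ↦ ?_
  obtain ⟨n, hn, j, hlo, hhi⟩ := hf.exists_pos_nat_mul_mem_Ioo hs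
  have hfn : ∀ x, (f ^ n) x < x + j :=
    (f ^ n).map_lt_of_translationNumber_lt_int (by rwa [translationNumber_pow])
  have : τ (g ^ n) ≤ j - s := (g ^ n).translationNumber_le_of_le_add fun x ↦ by
    linarith [hfn x, pow_apply_add_le hs.le h hn.ne' x]
  rw [translationNumber_pow, hgf] at this
  linarith

lemma translationNumber_translate_mul (m : ℤ) (g : CircleDeg1Lift) :
    τ (translate (Multiplicative.ofAdd (m : ℝ)) * g) = m + τ g := by
  rw [translationNumber_mul_of_commute, translationNumber_translate]
  exact commute_iff_commute.2 fun x ↦ by simp [translate_apply, map_int_add]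

end CircleDeg1Lift

lemma IsLift.exists_int_forall_sub_mem_Icc {f g : S¹ ≃ₜ S¹} {F G : CircleDeg1Lift}
    (hF : IsLift f F) (hG : IsLift g G) (hne : ∀ t, f t ≠ g t) :
    ∃ m : ℤ, ∃ s : ℝ, 0 < s ∧ ∀ x, F x - G x ∈ Icc (m + s) (m + 1 - s) := by
  refine Periodic.exists_forall_mem_Icc_of_ne_intCast (fun x ↦ ?_) (hF.continuous.sub hG.continuous)
    fun x j hj ↦ hne x ?_
  · simp only [map_add_one]
    ring
  · rw [hF, hG, AddCircle.coe_eq_coe_iff_exists_int]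
    exact ⟨j, hj⟩

lemma IsLift.translationNumber_sub_ne_intCast {f g : S¹ ≃ₜ S¹} {F G : CircleDeg1Lift}
    (hF : IsLift f F) (hG : IsLift g G) (hα : Irrational (τ F)) (hne : ∀ t, f t ≠ g t) (k : ℤ) :
    τ F - τ G ≠ k := by
  intro hk
  obtain ⟨m, s, hs, hsep⟩ := hF.exists_int_forall_sub_mem_Icc hG hne
  have hlow : m + τ G < τ F := by
    rw [← translationNumber_translate_mul]
    refine translationNumber_lt_of_forall_add_le hα hs fun x ↦ ?_
    rw [mul_apply, translate_apply]
    linarith [(hsep x).1]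
  have hhigh : τ F < (m + 1 : ℤ) + τ G := by
    rw [← translationNumber_translate_mul]
    refine translationNumber_lt_of_forall_add_le ?_ hs fun x ↦ ?_
    · rw [translationNumber_translate_mul,
        show ((m + 1 : ℤ) : ℝ) + τ G = τ F + (m + 1 - k : ℤ) by push_cast; linarith]
      exact hα.add_intCast _
    · rw [mul_apply, translate_apply]
      push_cast
      linarith [(hsep x).2]
  have hmk : m < k := by exact_mod_cast (show (m : ℝ) < k by linarith)
  have hkm : k < m + 1 := by exact_mod_cast (show (k : ℝ) < (m + 1 : ℤ) by linarith)
  omega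

/-- Two orientation-preserving circle homeomorphisms with the same irrational rotation number
differ by an element with a fixed point. -/
theorem stmt7 (f g : S¹ ≃ₜ S¹) (hf : OrientationPreserving f) (hg : OrientationPreserving g)
    (heq : rot f = rot g) (hirr : ∀ q : ℚ, rot f ≠ ((q : ℝ) : S¹)) :
    (FixSet (f * g⁻¹)).Nonempty := by
  have hrot : ∀ h (hh : OrientationPreserving h), rot h = ((τ hh.choose : ℝ) : S¹) :=
    fun _ hh ↦ dif_pos hh
  have hα : Irrational (τ hf.choose) := fun ⟨q, hq⟩ ↦ hirr q (by rw [hrot f hf, ← hq])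
  obtain ⟨k, hk⟩ : ∃ k : ℤ, τ hf.choose - τ hg.choose = k :=
    AddCircle.coe_eq_coe_iff_exists_int.1 (by rwa [← hrot f hf, ← hrot g hg])
  suffices ∃ t, f t = g t by
    obtain ⟨t, ht⟩ := this
    exact ⟨g t, show f (g.symm (g t)) = g t by rw [g.symm_apply_apply, ht]⟩
  by_contra! hne
  exact hf.choose_spec.translationNumber_sub_ne_intCast hg.choose_spec hα hne k hk
end
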